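/- arXiv:2210.07835 — 2 statements merged into one kernel-verified Lean document; each statement's English description precedes it below -/
import Mathlib

section
/- Let G be a finite connected simple graph. If V(G) can be written as a union V(G) = V_1 ∪ … ∪ V_k such that for each i ∈ [k] the induced subgraph G[V_i] is a convex subgraph of G and μt(G[V_i]) = 0, then μt(G) = 0. -/
/-!
A shortest path of `G` between two vertices of a convex set `Vᵢ` stays inside `Vᵢ`, and it is
then also a shortest path of `G[Vᵢ]`. Hence a total mutual-visibility set `X` of `G` restricts to
a total mutual-visibility set of every `G[Vᵢ]`, which must be empty as `μt(G[Vᵢ]) = 0`. Since the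
`Vᵢ` cover `V(G)`, `X` itself is empty.
-/

open SimpleGraph

/-- Vertices `x` and `y` are `X`-visible in `G`: some shortest `x,y`-path has
no internal vertex in `X`. -/
def Visible {V : Type*} (G : SimpleGraph V) (X : Set V) (x y : V) : Prop :=
  ∃ p : G.Walk x y, p.length = G.dist x y ∧ ∀ v ∈ p.support, v ∈ X → v = x ∨ v = y

/-- `X` is a mutual-visibility set of `G`: every two vertices of `X` are `X`-visible. -/
def IsMVSet {V : Type*} (G : SimpleGraph V) (X : Set V) : Prop :=
  ∀ x ∈ X, ∀ y ∈ X, Visible G X x y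

/-- `X` is a total mutual-visibility set of `G`: every two vertices of `G` are
`X`-visible. -/
def IsTMVSet {V : Type*} (G : SimpleGraph V) (X : Set V) : Prop :=
  ∀ x y : V, Visible G X x y

/-- The mutual-visibility number of `G`: the maximum cardinality of a
mutual-visibility set. -/
noncomputable def mu {V : Type*} (G : SimpleGraph V) : ℕ :=
  sSup {n | ∃ X : Set V, IsMVSet G X ∧ X.ncard = n}

/-- The total mutual-visibility number of `G`: the maximum cardinality of a total
mutual-visibility set. -/
noncomputable def muT {V : Type*} (G : SimpleGraph V) : ℕ :=
  sSup {n | ∃ X : Set V, IsTMVSet G X ∧ X.ncard = n}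

/-- A feasible total mutual-visibility set: a total mutual-visibility set `S` such that
any two adjacent vertices of `S` have a common neighbor outside `S`. -/
def IsFeasibleTMVSet {V : Type*} (G : SimpleGraph V) (S : Set V) : Prop :=
  IsTMVSet G S ∧ ∀ x ∈ S, ∀ y ∈ S, G.Adj x y → ∃ z ∉ S, G.Adj x z ∧ G.Adj y z

/-- The strong product of two simple graphs. -/
def strongProd {α β : Type*} (G : SimpleGraph α) (H : SimpleGraph β) :
    SimpleGraph (α × β) where
  Adj x y := (G.Adj x.1 y.1 ∧ x.2 = y.2) ∨ (x.1 = y.1 ∧ H.Adj x.2 y.2) ∨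
    (G.Adj x.1 y.1 ∧ H.Adj x.2 y.2)
  symm := by
    constructor
    rintro ⟨a, b⟩ ⟨c, d⟩ (⟨h1, h2⟩ | ⟨h1, h2⟩ | ⟨h1, h2⟩)
    · exact Or.inl ⟨h1.symm, h2.symm⟩
    · exact Or.inr (Or.inl ⟨h1.symm, h2.symm⟩)
    · exact Or.inr (Or.inr ⟨h1.symm, h2.symm⟩)
  loopless := by
    constructor
    rintro ⟨a, b⟩ (⟨h, _⟩ | ⟨_, h⟩ | ⟨h, _⟩)
    · exact G.irrefl h
    · exact H.irrefl h
    · exact G.irrefl h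

/-- The iterated (associative) strong product of a finite family of graphs:
two tuples are adjacent iff they are distinct and agree or are adjacent in every
coordinate. -/
def strongProdPi {k : ℕ} {V : Fin k → Type*} (G : ∀ i, SimpleGraph (V i)) :
    SimpleGraph (∀ i, V i) where
  Adj x y := x ≠ y ∧ ∀ i, x i = y i ∨ (G i).Adj (x i) (y i)
  symm := by
    constructor
    rintro x y ⟨hne, h⟩
    exact ⟨hne.symm, fun i => (h i).imp Eq.symm fun hh => hh.symm⟩
  loopless := ⟨fun x h => h.1 rfl⟩

/-- A universal vertex: adjacent to all other vertices. -/
def IsUniversal {V : Type*} (G : SimpleGraph V) (v : V) : Prop :=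
  ∀ u : V, u ≠ v → G.Adj v u

/-- A cut vertex: its removal disconnects the graph. -/
def IsCutVertex {V : Type*} (G : SimpleGraph V) (v : V) : Prop :=
  ¬ (G.induce ({v}ᶜ : Set V)).Preconnected

/-- An induced path: a path with no chords between its vertices. -/
def IsInducedPath {V : Type*} (G : SimpleGraph V) {u v : V} (p : G.Walk u v) : Prop :=
  p.IsPath ∧ ∀ a b : V, a ∈ p.support → b ∈ p.support → G.Adj a b → s(a, b) ∈ p.edges

/-- A block graph: a connected graph in which every pair of vertices is joined
by a unique induced path. -/
def IsBlockGraph {V : Type*} (G : SimpleGraph V) : Prop :=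
  G.Connected ∧ ∀ u v : V, ∃! p : G.Walk u v, IsInducedPath G p

/-- A convex set of vertices: every shortest path of `G` between two of its
vertices stays inside the set. -/
def IsConvexSet {V : Type*} (G : SimpleGraph V) (A : Set V) : Prop :=
  ∀ x ∈ A, ∀ y ∈ A, ∀ p : G.Walk x y, p.length = G.dist x y → ∀ v ∈ p.support, v ∈ A

/-- A cactus graph: a connected graph in which every edge lies in at most one cycle,
i.e. two cycles sharing an edge have the same edge set. -/
def IsCactus {V : Type*} (G : SimpleGraph V) : Prop :=
  G.Connected ∧ ∀ (v : V) (p q : G.Walk v v), p.IsCycle → q.IsCycle →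
    ∀ e, e ∈ p.edges → e ∈ q.edges → ∀ e', e' ∈ p.edges ↔ e' ∈ q.edges

/-- A cograph: obtained from a single vertex by repeatedly adding twins, i.e. there is
an enumeration of the vertices in which every vertex except the first is, at the
moment of its addition, a (true or false) twin of some earlier vertex in the induced
subgraph on the vertices added so far. -/
def IsCograph {V : Type*} (G : SimpleGraph V) : Prop :=
  ∃ l : List V, l.Nodup ∧ (∀ v : V, v ∈ l) ∧
    ∀ i : Fin l.length, (i : ℕ) ≠ 0 →
      ∃ j : Fin l.length, (j : ℕ) < (i : ℕ) ∧
        ∀ z ∈ l.take ((i : ℕ) + 1), z ≠ l.get i → z ≠ l.get j →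
          (G.Adj (l.get i) z ↔ G.Adj (l.get j) z)

/-- An enabling vertex: a vertex `v` adjacent to every vertex `u` of `G - v` whose
degree in `G - v` is less than `n(G) - 2`. -/
def IsEnabling {V : Type*} [Fintype V] (G : SimpleGraph V) (v : V) : Prop :=
  ∀ u : V, u ≠ v → (G.neighborSet u \ {v}).ncard < Fintype.card V - 2 → G.Adj v u

namespace SimpleGraph

variable {V W : Type*} {G : SimpleGraph V} {G' : SimpleGraph W} {u v : V}

lemma Reachable.dist_map_le (φ : G →g G') (h : G.Reachable u v) :
    G'.dist (φ u) (φ v) ≤ G.dist u v := by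
  obtain ⟨p, hp⟩ := h.exists_walk_length_eq_dist
  calc G'.dist (φ u) (φ v) ≤ (p.map φ).length := dist_le _
    _ = G.dist u v := by rw [Walk.length_map, hp]

lemma Walk.length_eq_dist_of_length_map_eq_dist (φ : G →g G') (p : G.Walk u v)
    (hp : (p.map φ).length = G'.dist (φ u) (φ v)) : p.length = G.dist u v := by
  have hle := p.reachable.dist_map_le φ
  have hge := dist_le p
  rw [Walk.length_map] at hp
  omega

end SimpleGraph

lemma IsConvexSet.isTMVSet_induce {V : Type*} {G : SimpleGraph V} {A X : Set V}
    (hA : IsConvexSet G A) (hX : IsTMVSet G X) :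
    IsTMVSet (G.induce A) (Subtype.val ⁻¹' X) := by
  intro x y
  obtain ⟨p, hp, hint⟩ := hX x y
  let q := p.induce A (hA x x.2 y y.2 p hp)
  have hq : q.map (Embedding.induce A).toHom = p := Walk.map_induce _ _
  refine ⟨q, q.length_eq_dist_of_length_map_eq_dist _ (by rw [hq]; exact hp), ?_⟩
  intro w hw hwX
  have hwp : w.1 ∈ p.support := by
    simpa [q, Walk.support_induce] using hw
  exact (hint w hwp hwX).imp Subtype.ext Subtype.ext

lemma muT_eq_zero_iff {V : Type*} [Finite V] {G : SimpleGraph V} :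
    muT G = 0 ↔ ∀ X : Set V, IsTMVSet G X → X = ∅ := by
  constructor
  · intro h X hX
    have hbdd : BddAbove {n | ∃ X : Set V, IsTMVSet G X ∧ X.ncard = n} :=
      ⟨Nat.card V, by rintro _ ⟨Y, -, rfl⟩; exact Set.ncard_le_card Y⟩
    have hle : X.ncard ≤ muT G := le_csSup hbdd ⟨X, hX, rfl⟩
    rw [h, Nat.le_zero, Set.ncard_eq_zero] at hle
    exact hle
  · intro h
    refine Nat.eq_zero_of_le_zero (csSup_le' ?_)
    rintro _ ⟨X, hX, rfl⟩
    rw [h X hX, Set.ncard_empty]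

theorem stmt_0_general {V : Type*} [Fintype V] (G : SimpleGraph V)
    {k : ℕ} (f : Fin k → Set V) (hcov : (⋃ i, f i) = Set.univ)
    (hconv : ∀ i, IsConvexSet G (f i))
    (hzero : ∀ i, muT (G.induce (f i)) = 0) :
    muT G = 0 := by
  refine muT_eq_zero_iff.2 fun X hX => Set.eq_empty_of_forall_notMem fun v hv => ?_
  obtain ⟨i, hvi⟩ := Set.mem_iUnion.1 (hcov ▸ Set.mem_univ v)
  have hXi := muT_eq_zero_iff.1 (hzero i) _ ((hconv i).isTMVSet_induce hX)
  exact (Set.eq_empty_iff_forall_notMem.1 hXi) ⟨v, hvi⟩ hv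

theorem stmt_0 {V : Type*} [Fintype V] (G : SimpleGraph V) (hG : G.Connected)
    {k : ℕ} (f : Fin k → Set V) (hcov : (⋃ i, f i) = Set.univ)
    (hconv : ∀ i, IsConvexSet G (f i))
    (hzero : ∀ i, muT (G.induce (f i)) = 0) :
    muT G = 0 :=
  stmt_0_general G f hcov hconv hzero
end

section
/- For every integer n ≥ 5, the cycle C_n satisfies μt(C_n) = 0; that is, the only total mutual-visibility set of C_n is the empty set. -/
open SimpleGraph

open scoped Fin.NatCast Fin.CommRing

lemma fin_cast_ne_zero (m k : ℕ) (hk : 0 < k) (hk' : k < m + 5) : (k : Fin (m+5)) ≠ 0 := by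
  intro h
  have h2 := Fin.val_cast_of_lt (n := m+5) hk'
  rw [h] at h2
  simp at h2
  omega

lemma tmv_empty (m : ℕ) (X : Set (Fin (m+5)))
    (hX : IsTMVSet (SimpleGraph.cycleGraph (m+5)) X) : X = ∅ := by
  set G := SimpleGraph.cycleGraph (m+5) with hG
  have adjIff : ∀ a b : Fin (m+5), G.Adj a b ↔ a - b = 1 ∨ b - a = 1 := fun a b =>
    SimpleGraph.cycleGraph_adj (n := m+3)
  by_contra hne
  obtain ⟨v, hv⟩ := Set.nonempty_iff_ne_empty.2 hne
  have h1 : (1 : Fin (m+5)) ≠ 0 := by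
    have := fin_cast_ne_zero m 1 (by norm_num) (by omega); simpa using this
  have h2 : (2 : Fin (m+5)) ≠ 0 := by
    have := fin_cast_ne_zero m 2 (by norm_num) (by omega); simpa using this
  have h3 : (3 : Fin (m+5)) ≠ 0 := by
    have := fin_cast_ne_zero m 3 (by norm_num) (by omega); simpa using this
  have h4 : (4 : Fin (m+5)) ≠ 0 := by
    have := fin_cast_ne_zero m 4 (by norm_num) (by omega); simpa using this
  obtain ⟨x, hx⟩ : ∃ x, x = v - 1 := ⟨_, rfl⟩
  obtain ⟨y, hy⟩ : ∃ y, y = v + 1 := ⟨_, rfl⟩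
  have hxv : G.Adj x v := (adjIff _ _).2 (Or.inr (by rw [hx]; ring))
  have hvy : G.Adj v y := (adjIff _ _).2 (Or.inr (by rw [hy]; ring))
  have hxy : x ≠ y := by
    intro h; exact h2 (by rw [hx, hy] at h; linear_combination -h)
  have hnadj : ¬ G.Adj x y := by
    rw [adjIff]
    rintro (h | h)
    · exact h3 (by rw [hx, hy] at h; linear_combination -h)
    · exact h1 (by rw [hx, hy] at h; linear_combination h)
  have hvx : v ≠ x := fun h => h1 (by rw [hx] at h; linear_combination h)
  have hvy' : v ≠ y := fun h => h1 (by rw [hy] at h; linear_combination -h)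
  have hconn : G.Connected := SimpleGraph.cycleGraph_connected (n := m+4)
  have hd2 : G.dist x y = 2 := by
    have hle : G.dist x y ≤ 2 := by
      have := SimpleGraph.dist_le (Walk.cons hxv (Walk.cons hvy Walk.nil))
      simpa using this
    have h0 : 0 < G.dist x y := hconn.pos_dist_of_ne hxy
    have h1' : G.dist x y ≠ 1 := fun h => hnadj (SimpleGraph.dist_eq_one_iff_adj.1 h)
    omega
  obtain ⟨p, hlen, hsupp⟩ := hX x y
  rw [hd2] at hlen
  cases p with
  | nil => exact hxy rfl
  | @cons _ b _ h q =>
    cases q with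
    | nil => simp at hlen
    | @cons _ c _ h' q' =>
      have hq' : q'.length = 0 := by simp only [Walk.length_cons] at hlen; omega
      have hc := SimpleGraph.Walk.eq_of_length_eq_zero hq'
      subst hc
      have hb : b = v := by
        rcases (adjIff _ _).1 h with h5 | h5
        · rcases (adjIff _ _).1 h' with h6 | h6
          · exact absurd (show (4:Fin (m+5)) = 0 by
              rw [hx] at h5; rw [hy] at h6; linear_combination -h5 - h6) h4
          · exact absurd (show (2:Fin (m+5)) = 0 by
              rw [hx] at h5; rw [hy] at h6; linear_combination -h5 + h6) h2
        · rw [hx] at h5; linear_combination h5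
      subst hb
      rcases hsupp b (by simp) hv with h | h
      · exact hvx h
      · exact hvy' h

theorem stmt_18 (n : ℕ) (hn : 5 ≤ n) :
    muT (SimpleGraph.cycleGraph n) = 0 ∧
    ∀ X : Set (Fin n), IsTMVSet (SimpleGraph.cycleGraph n) X → X = ∅ := by
  obtain ⟨m, rfl⟩ : ∃ m, n = m + 5 := ⟨n - 5, by omega⟩
  have hemp : ∀ X : Set (Fin (m+5)), IsTMVSet (SimpleGraph.cycleGraph (m+5)) X → X = ∅ :=
    fun X hX => tmv_empty m X hX
  refine ⟨?_, hemp⟩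
  have hconn : (SimpleGraph.cycleGraph (m+5)).Connected :=
    SimpleGraph.cycleGraph_connected (n := m+4)
  have hS : {k | ∃ X : Set (Fin (m+5)), IsTMVSet (SimpleGraph.cycleGraph (m+5)) X ∧ X.ncard = k}
      = {0} := by
    ext k
    simp only [Set.mem_setOf_eq, Set.mem_singleton_iff]
    constructor
    · rintro ⟨X, hX, rfl⟩
      rw [hemp X hX]
      simp
    · rintro rfl
      refine ⟨∅, fun x y => ?_, by simp⟩
      obtain ⟨p, hp⟩ := hconn.exists_walk_length_eq_dist x y
      exact ⟨p, hp, fun v _ hv => absurd hv (Set.notMem_empty v)⟩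
  rw [muT, hS]
  exact csSup_singleton 0
end
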